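/- Let (X, ⋆, e) be a commutative cancellative positive monoid (a ⋆ b = e implies a = b = e) whose natural divisibility order (x ≤ y iff y = x ⋆ z for some z) admits binary suprema. Then (X, ≤) is a lattice and (x ∨ y) ⋆ (x ∧ y) = x ⋆ y for all x, y ∈ X. -/
import Mathlib


/-- If `(X, ⋆, e)` is a commutative cancellative positive monoid whose natural
divisibility order admits binary suprema, then `(X, ≤)` is a lattice (binary
infima exist as well) and `(x ∨ y) ⋆ (x ∧ y) = x ⋆ y`. -/
theorem lmonoid_sup_mul_inf (X : Type*) [CommMonoid X]
    (hcancel : ∀ a b c : X, a * c = b * c → a = b)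
    (hpos : ∀ a b : X, a * b = 1 → a = 1 ∧ b = 1)
    (hsup : ∀ x y : X, ∃ s : X, (∃ z, s = x * z) ∧ (∃ z, s = y * z) ∧
      ∀ t : X, (∃ z, t = x * z) → (∃ z, t = y * z) → ∃ z, t = s * z) :
    ∀ x y : X,
      (∃ i : X, (∃ z, x = i * z) ∧ (∃ z, y = i * z) ∧
        ∀ t : X, (∃ z, x = t * z) → (∃ z, y = t * z) → ∃ z, i = t * z)
      ∧ ∀ s i : X,
        ((∃ z, s = x * z) ∧ (∃ z, s = y * z) ∧
          ∀ t : X, (∃ z, t = x * z) → (∃ z, t = y * z) → ∃ z, t = s * z) →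
        ((∃ z, x = i * z) ∧ (∃ z, y = i * z) ∧
          ∀ t : X, (∃ z, x = t * z) → (∃ z, y = t * z) → ∃ z, i = t * z) →
        s * i = x * y := by
  have antisymm : ∀ a b : X, (∃ z, a = b * z) → (∃ z, b = a * z) → a = b := by
    rintro a b ⟨u, hu⟩ ⟨v, hv⟩
    have h1 : a * (v * u) = a * 1 := by
      rw [mul_one, ← mul_assoc, ← hv, ← hu]
    have h2 : (v * u) * a = 1 * a := by rw [mul_comm, h1, one_mul, mul_one]
    have h3 := hcancel _ _ _ h2
    obtain ⟨hv1, hu1⟩ := hpos _ _ h3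
    rw [hu, hu1, mul_one]
  intro x y
  obtain ⟨s, ⟨a, ha⟩, ⟨b, hb⟩, hsle⟩ := hsup x y
  obtain ⟨i, hi⟩ := hsle (x * y) ⟨y, rfl⟩ ⟨x, mul_comm x y⟩
  have hix : ∃ z, x = i * z := by
    refine ⟨b, hcancel _ _ y ?_⟩
    rw [hi, hb]; ac_rfl
  have hiy : ∃ z, y = i * z := by
    refine ⟨a, hcancel _ _ x ?_⟩
    have : x * y = s * i := hi
    rw [mul_comm x y] at this
    rw [this, ha]; ac_rfl
  have hile : ∀ t : X, (∃ z, x = t * z) → (∃ z, y = t * z) → ∃ z, i = t * z := by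
    rintro t ⟨u, hu⟩ ⟨v, hv⟩
    obtain ⟨k, hk⟩ := hsle (t * (u * v)) ⟨v, by rw [hu]; ac_rfl⟩ ⟨u, by rw [hv]; ac_rfl⟩
    refine ⟨k, hcancel _ _ s ?_⟩
    have hxy : x * y = s * i := hi
    rw [hu, hv] at hxy
    have : s * i = t * (t * (u * v)) := by rw [← hxy]; ac_rfl
    rw [hk] at this
    calc i * s = s * i := mul_comm _ _
      _ = t * (s * k) := this
      _ = t * k * s := by ac_rfl
  refine ⟨⟨i, hix, hiy, hile⟩, ?_⟩
  rintro s' i' ⟨hs'x, hs'y, hs'le⟩ ⟨hi'x, hi'y, hi'le⟩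
  have hs : s' = s := antisymm _ _ (hsle s' hs'x hs'y) (hs'le s ⟨a, ha⟩ ⟨b, hb⟩)
  have hii : i' = i := antisymm _ _ (hi'le i hix hiy) (hile i' hi'x hi'y)
  rw [hs, hii, ← hi]
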